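/- For x ∈ ℝⁿ with x ≠ 0, the time integral of the expectation density is given in terms of a modified Bessel function: μ ∫_0^∞ ((λBt)^k / k!) e^{-λt} (4πDt)^{-n/2} exp(-|x|²/(4Dt)) dt = (μ/(λ k!)) (B/2)^k (2πD/λ)^{-n/2} z^ν K_ν(z), where z = |x|√(λ/D) and ν = k − n/2 + 1. -/

import Mathlib

open Real MeasureTheory

/-- Modified Bessel function of the second kind, via its integral representation
`K_ν(z) = ∫_0^∞ e^{-z cosh t} cosh(ν t) dt`. -/
noncomputable def besselK (nu z : ℝ) : ℝ :=
  ∫ t in Set.Ioi (0 : ℝ), Real.exp (-z * Real.cosh t) * Real.cosh (nu * t)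

/-! Substituting `t = (z / 2λ) eˢ` balances the exponents `−|x|²/(4Dt)` and `−λt` into `−z cosh s`,
so the time integral becomes `∫_ℝ e^{νs − z cosh s} ds`; since `cosh` is even this is
`2 K_ν(z)`. The Poisson factor `(λBt)^k/k!` and the heat-kernel power `t^{−n/2}` only shift
the index to `ν = k − n/2 + 1`, and the remaining constants are bookkeeping. -/

open Set Filter

lemma one_add_sq_div_four_le_cosh (s : ℝ) : 1 + s ^ 2 / 4 ≤ cosh s := by
  rw [cosh_eq]
  rcases le_total 0 s with hs | hs
  · nlinarith [quadratic_le_exp_of_nonneg hs, add_one_le_exp (-s)]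
  · nlinarith [quadratic_le_exp_of_nonneg (neg_nonneg.2 hs), add_one_le_exp s]

lemma integrable_exp_mul_sub_mul_cosh (ν : ℝ) {z : ℝ} (hz : 0 < z) :
    Integrable fun s : ℝ => exp (ν * s - z * cosh s) := by
  have hgauss : Integrable fun s : ℝ => exp (-(z / 4) * s ^ 2 + ν * s - z) := by
    have := (integrable_cexp_quadratic (b := ((z / 4 : ℝ) : ℂ)) (by simp; positivity)
      ν (-z)).norm
    simpa [Complex.norm_exp, ← Complex.ofReal_pow, sub_eq_add_neg] using this
  refine hgauss.mono' (by fun_prop) (Eventually.of_forall fun s => ?_)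
  rw [Real.norm_of_nonneg (exp_pos _).le, exp_le_exp]
  nlinarith [one_add_sq_div_four_le_cosh s]

lemma integral_exp_mul_sub_mul_cosh_eq_two_mul_besselK (ν : ℝ) {z : ℝ} (hz : 0 < z) :
    ∫ s : ℝ, exp (ν * s - z * cosh s) = 2 * besselK ν z := by
  set f := fun s : ℝ => exp (ν * s - z * cosh s)
  have hf : Integrable f := integrable_exp_mul_sub_mul_cosh ν hz
  have heven (s : ℝ) : f s + f (-s) = 2 * (exp (-z * cosh |s|) * cosh (ν * |s|)) := by
    have hcosh : cosh (ν * |s|) = cosh (ν * s) := by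
      rcases abs_choice s with h | h <;> simp [h]
    rw [cosh_abs, hcosh, cosh_eq (ν * s)]
    simp only [f, cosh_neg, mul_neg, sub_eq_add_neg, exp_add, neg_mul]
    ring
  have : 2 * ∫ s, f s = 2 * (2 * besselK ν z) :=
    calc 2 * ∫ s, f s = ∫ s, (f s + f (-s)) := by
          rw [integral_add hf hf.comp_neg, integral_neg_eq_self]; ring
      _ = 2 * (2 * besselK ν z) := by
          simp_rw [heven, integral_const_mul]
          rw [integral_comp_abs (f := fun s => exp (-z * cosh s) * cosh (ν * s))]
          rfl
  linarith

lemma integral_Ioi_zero_eq_integral_comp_mul_exp {E : Type*} [NormedAddCommGroup E]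
    [NormedSpace ℝ E] (g : ℝ → E) {c : ℝ} (hc : 0 < c) :
    ∫ t in Ioi 0, g t = ∫ s, (c * exp s) • g (c * exp s) := by
  have himage : (fun s => c * exp s) '' univ = Ioi 0 := by
    rw [image_univ, range_comp' (c * ·) exp, range_exp, image_mul_left_Ioi hc, mul_zero]
  rw [← himage, integral_image_eq_integral_abs_deriv_smul MeasurableSet.univ
    (fun s _ => ((hasDerivAt_exp s).const_mul c).hasDerivWithinAt)
    (fun p _ q _ h => exp_injective (mul_left_cancel₀ hc.ne' h)), Measure.restrict_univ]
  simp_rw [abs_of_pos (mul_pos hc (exp_pos _))]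

lemma integral_rpow_mul_exp_neg_div_sub_mul (ν : ℝ) {z b : ℝ} (hz : 0 < z) (hb : 0 < b) :
    ∫ t in Ioi 0, t ^ (ν - 1) * exp (-(z ^ 2 / (4 * b) / t) - b * t)
      = 2 * (z / (2 * b)) ^ ν * besselK ν z := by
  set c := z / (2 * b)
  have hc : 0 < c := by positivity
  have hintegrand (s : ℝ) : (c * exp s) • ((c * exp s) ^ (ν - 1) *
      exp (-(z ^ 2 / (4 * b) / (c * exp s)) - b * (c * exp s)))
        = c ^ ν * exp (ν * s - z * cosh s) := by
    have hu : 0 < c * exp s := mul_pos hc (exp_pos s)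
    have hexp : -(z ^ 2 / (4 * b) / (c * exp s)) - b * (c * exp s) = -(z * cosh s) := by
      simp only [c, cosh_eq, exp_neg]
      field_simp
      ring
    rw [hexp, smul_eq_mul, ← mul_assoc, rpow_sub_one hu.ne', mul_div_cancel₀ _ hu.ne',
      mul_rpow hc.le (exp_pos s).le, ← exp_mul, mul_assoc, ← exp_add]
    ring_nf
  rw [integral_Ioi_zero_eq_integral_comp_mul_exp _ hc]
  simp_rw [hintegrand]
  rw [integral_const_mul, integral_exp_mul_sub_mul_cosh_eq_two_mul_besselK ν hz]
  ring

open Nat in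
lemma poisson_mul_heatKernel_eq (lam B D r q : ℝ) (k : ℕ) (hD : 0 < D) {t : ℝ} (ht : 0 < t) :
    (lam * B * t) ^ k / k ! * exp (-lam * t) *
        ((4 * π * D * t) ^ q * exp (-r ^ 2 / (4 * D * t)))
      = (lam * B) ^ k / k ! * (4 * π * D) ^ q *
          (t ^ ((k + q + 1) - 1) * exp (-(r ^ 2 / (4 * D) / t) - lam * t)) := by
  rw [add_sub_cancel_right, mul_pow, mul_rpow (by positivity) ht.le, rpow_add ht, rpow_natCast,
    sub_eq_add_neg, exp_add, div_div, mul_comm (4 * D) t]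
  ring_nf

open Nat in
lemma poisson_heat_prefactor_eq {lam c z : ℝ} (hlam : 0 < lam) (hc : 0 < c) (hz : 0 < z)
    (B q : ℝ) (k : ℕ) :
    (lam * B) ^ k / k ! * (2 * lam * c) ^ q * (2 * (z / (2 * lam)) ^ ((k : ℝ) + q + 1))
      = 1 / (lam * k !) * (B / 2) ^ k * c ^ q * z ^ ((k : ℝ) + q + 1) := by
  have h2lam : 0 < 2 * lam := by positivity
  rw [mul_rpow h2lam.le hc.le, div_rpow hz.le h2lam.le, rpow_add h2lam, rpow_add h2lam,
    rpow_natCast, rpow_one, div_pow B]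
  field_simp
  ring

theorem time_integrated_density_bessel_general
    (mu lam D B : ℝ) (hlam : 0 < lam) (hD : 0 < D)
    (n : ℕ) (k : ℕ)
    (x : EuclideanSpace ℝ (Fin n)) (hx : x ≠ 0) :
    mu * ∫ t in Set.Ioi (0 : ℝ),
        (lam * B * t) ^ k / (Nat.factorial k) * Real.exp (-lam * t) *
          ((4 * π * D * t) ^ (-(n : ℝ) / 2) * Real.exp (-‖x‖ ^ 2 / (4 * D * t)))
      = mu / (lam * (Nat.factorial k)) * (B / 2) ^ k * (2 * π * D / lam) ^ (-(n : ℝ) / 2)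
          * (‖x‖ * Real.sqrt (lam / D)) ^ ((k : ℝ) - (n : ℝ) / 2 + 1)
          * besselK ((k : ℝ) - (n : ℝ) / 2 + 1) (‖x‖ * Real.sqrt (lam / D)) := by
  set q : ℝ := -(n : ℝ) / 2
  set z : ℝ := ‖x‖ * sqrt (lam / D)
  have hz : 0 < z := mul_pos (norm_pos_iff.2 hx) (sqrt_pos.2 (div_pos hlam hD))
  have ha : ‖x‖ ^ 2 / (4 * D) = z ^ 2 / (4 * lam) := by
    rw [mul_pow, sq_sqrt (div_pos hlam hD).le]
    field_simp
  have hc : 4 * π * D = 2 * lam * (2 * π * D / lam) := by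
    field_simp
    ring
  rw [show (k : ℝ) - n / 2 + 1 = k + q + 1 by ring,
    setIntegral_congr_fun measurableSet_Ioi fun t ht =>
      poisson_mul_heatKernel_eq lam B D ‖x‖ q k hD ht,
    integral_const_mul, ha, integral_rpow_mul_exp_neg_div_sub_mul _ hz hlam, hc]
  linear_combination (mu * besselK (k + q + 1) z) *
    poisson_heat_prefactor_eq hlam (by positivity : 0 < 2 * π * D / lam) hz B q k

theorem time_integrated_density_bessel
    (mu lam D B : ℝ) (hmu : 0 < mu) (hlam : 0 < lam) (hD : 0 < D) (hB : 0 < B)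
    (n : ℕ) (hn : 1 ≤ n) (k : ℕ)
    (x : EuclideanSpace ℝ (Fin n)) (hx : x ≠ 0) :
    mu * ∫ t in Set.Ioi (0 : ℝ),
        (lam * B * t) ^ k / (Nat.factorial k) * Real.exp (-lam * t) *
          ((4 * π * D * t) ^ (-(n : ℝ) / 2) * Real.exp (-‖x‖ ^ 2 / (4 * D * t)))
      = mu / (lam * (Nat.factorial k)) * (B / 2) ^ k * (2 * π * D / lam) ^ (-(n : ℝ) / 2)
          * (‖x‖ * Real.sqrt (lam / D)) ^ ((k : ℝ) - (n : ℝ) / 2 + 1)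
          * besselK ((k : ℝ) - (n : ℝ) / 2 + 1) (‖x‖ * Real.sqrt (lam / D)) :=
  time_integrated_density_bessel_general mu lam D B hlam hD n k x hx
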